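/- arXiv:2209.13119 — 2 statements merged into one kernel-verified Lean document; each statement's English description precedes it below -/
import Mathlib

section
/- Let n and m be nonempty finite types. Let w : n → n → ℝ be a weight function with 0 ≤ w i j for all i, j and w i i = 0, whose graph is strongly connected, and let L be its Laplacian. Let Δt : ℝ with 0 < Δt, and set A = Matrix.exp ℝ (-(Δt • L)). Suppose C : Matrix m n ℝ is a state-output matrix, i.e. there is a function f : m → n such that C i j = 1 if j = f i and C i j = 0 otherwise. Then the pair (A, C) is uniformly detectable: there exist p q : ℕ and a b : ℝ with 0 ≤ a < 1 and 0 < b such that for every ζ : n → ℝ satisfying a * ‖ζ‖ ≤ ‖(A ^ p) *ᵥ ζ‖, one has b * (ζ ⬝ᵥ ζ) ≤ ∑ i in Finset.range (q + 1), (C *ᵥ ((A ^ i) *ᵥ ζ)) ⬝ᵥ (C *ᵥ ((A ^ i) *ᵥ ζ)). -/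
/-!
Write `-(Δt • L) = -(Δt s) • 1 + Δt • (s • 1 - L)` with `s` the total weight. The second summand
is entrywise nonnegative and positive along the edges of the graph, so by strong connectivity its
exponential, and hence `A`, is entrywise positive; as `L` annihilates constants, `A` is moreover row
stochastic. A positive stochastic matrix with smallest entry `ε` contracts the spread
`max x - min x` by the factor `1 - ε`, so for large `q` the vector `A ^ q ζ` is nearly constant.
If `‖A ^ q ζ‖ ≥ ‖ζ‖ / 2`, its single observed coordinate therefore has size at least `‖ζ‖ / 4`,
which bounds `ζ ⬝ᵥ ζ` by the output energy.
-/

open Matrix Finset Relation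
open scoped Nat

namespace Matrix

variable {n : Type*} [Fintype n] [DecidableEq n]

open scoped Norms.Operator in
theorem hasSum_exp_apply (M : Matrix n n ℝ) (i j : n) :
    HasSum (fun k : ℕ => (k ! : ℝ)⁻¹ * (M ^ k) i j) (NormedSpace.exp M i j) :=
  Pi.hasSum.mp (Pi.hasSum.mp (NormedSpace.exp_series_hasSum_exp' (𝕂 := ℝ) M) i) j

open scoped Norms.Operator in
theorem exp_algebraMap (c : ℝ) :
    NormedSpace.exp (algebraMap ℝ (Matrix n n ℝ) c) = algebraMap ℝ (Matrix n n ℝ) (Real.exp c) := by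
  rw [Real.exp_eq_exp_ℝ]
  exact (NormedSpace.algebraMap_exp_comm c).symm

theorem exp_smul_one_add (c : ℝ) (M : Matrix n n ℝ) :
    NormedSpace.exp (c • (1 : Matrix n n ℝ) + M) = Real.exp c • NormedSpace.exp M := by
  rw [exp_add_of_commute _ _ ((Commute.one_left M).smul_left c), ← Algebra.algebraMap_eq_smul_one,
    exp_algebraMap, Algebra.smul_def]

theorem exp_mulVec_of_mulVec_eq_zero {M : Matrix n n ℝ} {v : n → ℝ} (h : M *ᵥ v = 0) :
    NormedSpace.exp M *ᵥ v = v := by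
  funext i
  have hsum : HasSum (fun k : ℕ => (k ! : ℝ)⁻¹ * (M ^ k *ᵥ v) i) ((NormedSpace.exp M *ᵥ v) i) := by
    simp only [mulVec, dotProduct, Finset.mul_sum, ← mul_assoc]
    exact hasSum_sum fun j _ => (hasSum_exp_apply M i j).mul_right (v j)
  refine hsum.unique ?_
  convert hasSum_single 0 fun k hk => ?_ using 1
  · simp
  · obtain ⟨k, rfl⟩ := Nat.exists_eq_add_one_of_ne_zero hk
    rw [pow_succ, ← mulVec_mulVec, h, mulVec_zero, Pi.zero_apply, mul_zero]

theorem pow_apply_pos_of_reflTransGen {M : Matrix n n ℝ} (hM : ∀ i j, 0 ≤ M i j) {i j : n}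
    (h : ReflTransGen (fun a b => 0 < M a b) i j) : ∃ k, 0 < (M ^ k) i j := by
  induction h with
  | refl => exact ⟨0, by simp⟩
  | @tail b c _ hbc ih =>
    obtain ⟨k, hk⟩ := ih
    refine ⟨k + 1, ?_⟩
    rw [pow_succ, mul_apply]
    exact sum_pos' (fun d _ => mul_nonneg (pow_apply_nonneg hM k i d) (hM d c))
      ⟨b, mem_univ b, mul_pos hk hbc⟩

theorem exp_apply_pos_of_reflTransGen {M : Matrix n n ℝ} (hM : ∀ i j, 0 ≤ M i j) {i j : n}
    (h : ReflTransGen (fun a b => 0 < M a b) i j) : 0 < NormedSpace.exp M i j := by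
  obtain ⟨k, hk⟩ := pow_apply_pos_of_reflTransGen hM h
  refine hasSum_lt (f := 0) (fun l => ?_) ?_ hasSum_zero (hasSum_exp_apply M i j) (i := k)
  · exact mul_nonneg (by positivity) (pow_apply_nonneg hM l i j)
  · exact mul_pos (by positivity) hk

end Matrix

section WeightedLaplacian

variable {n : Type*} [Fintype n] [DecidableEq n]

def weightedLaplacian (w : n → n → ℝ) : Matrix n n ℝ :=
  Matrix.of fun i j => if i = j then ∑ k, w i k else -w i j

variable {w : n → n → ℝ}

theorem weightedLaplacian_mulVec_one (hdiag : ∀ i, w i i = 0) : weightedLaplacian w *ᵥ 1 = 0 := by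
  funext i
  simp only [weightedLaplacian, mulVec, dotProduct, of_apply, Pi.one_apply, mul_one, Pi.zero_apply]
  rw [← add_sum_erase _ _ (mem_univ i), if_pos rfl, ← add_sum_erase _ _ (mem_univ i), hdiag,
    zero_add, sum_congr rfl fun j hj => if_neg (ne_of_mem_erase hj).symm, sum_neg_distrib,
    add_neg_cancel]

theorem smul_one_sub_weightedLaplacian_apply (s : ℝ) (i j : n) :
    (s • 1 - weightedLaplacian w) i j = if i = j then s - ∑ k, w i k else w i j := by
  by_cases h : i = j <;> simp [weightedLaplacian, h]

theorem exp_neg_smul_weightedLaplacian_mulVec_one (hdiag : ∀ i, w i i = 0) (t : ℝ) :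
    NormedSpace.exp (-(t • weightedLaplacian w)) *ᵥ 1 = 1 :=
  exp_mulVec_of_mulVec_eq_zero <| by
    rw [neg_mulVec, smul_mulVec, weightedLaplacian_mulVec_one hdiag, smul_zero, neg_zero]

theorem exp_neg_smul_weightedLaplacian_apply_pos (hw : ∀ i j, 0 ≤ w i j) (hdiag : ∀ i, w i i = 0)
    {t : ℝ} (ht : 0 < t) {i j : n} (hij : ReflTransGen (fun a b => 0 < w a b) i j) :
    0 < NormedSpace.exp (-(t • weightedLaplacian w)) i j := by
  set s := ∑ a, ∑ b, w a b
  set M := t • (s • 1 - weightedLaplacian w)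
  have hM : ∀ a b, M a b = t * if a = b then s - ∑ k, w a k else w a b := fun a b => by
    simp only [M, Matrix.smul_apply, smul_one_sub_weightedLaplacian_apply, smul_eq_mul]
  have hM_nonneg : ∀ a b, 0 ≤ M a b := fun a b => by
    rw [hM]
    refine mul_nonneg ht.le ?_
    split_ifs
    · exact sub_nonneg.2 (single_le_sum (fun a _ => sum_nonneg fun b _ => hw a b) (mem_univ a))
    · exact hw a b
  have hM_pos : ∀ a b, 0 < w a b → 0 < M a b := fun a b hab => by
    have hne : a ≠ b := by rintro rfl; simp [hdiag] at hab
    rw [hM, if_neg hne]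
    exact mul_pos ht hab
  have hsplit : -(t • weightedLaplacian w) = (-(t * s)) • (1 : Matrix n n ℝ) + M := by
    simp only [M, smul_sub, smul_smul, neg_smul]
    abel
  rw [hsplit, exp_smul_one_add, Matrix.smul_apply, smul_eq_mul]
  exact mul_pos (Real.exp_pos _)
    (exp_apply_pos_of_reflTransGen hM_nonneg (ReflTransGen.mono hM_pos _ _ hij))

end WeightedLaplacian

section Spread

variable {n : Type*} [Fintype n] [Nonempty n]

noncomputable def spread (x : n → ℝ) : ℝ :=
  univ.sup' univ_nonempty x - univ.inf' univ_nonempty x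

theorem sub_le_spread (x : n → ℝ) (i j : n) : x i - x j ≤ spread x :=
  sub_le_sub (le_sup' x (mem_univ i)) (inf'_le x (mem_univ j))

theorem exists_spread_eq (x : n → ℝ) :
    ∃ i j, (∀ k, x j ≤ x k ∧ x k ≤ x i) ∧ spread x = x i - x j := by
  obtain ⟨i, -, hi⟩ := exists_mem_eq_sup' univ_nonempty x
  obtain ⟨j, -, hj⟩ := exists_mem_eq_inf' univ_nonempty x
  refine ⟨i, j, fun k => ⟨?_, ?_⟩, by rw [spread, hi, hj]⟩
  · exact hj ▸ inf'_le x (mem_univ k)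
  · exact hi ▸ le_sup' x (mem_univ k)

theorem spread_le_iff {x : n → ℝ} {r : ℝ} : spread x ≤ r ↔ ∀ i j, x i - x j ≤ r := by
  refine ⟨fun h i j => (sub_le_spread x i j).trans h, fun h => ?_⟩
  obtain ⟨i, j, -, hij⟩ := exists_spread_eq x
  exact hij ▸ h i j

theorem spread_nonneg (x : n → ℝ) : 0 ≤ spread x := by
  simpa using sub_le_spread x (Classical.arbitrary n) (Classical.arbitrary n)

theorem spread_le_two_mul_norm (x : n → ℝ) : spread x ≤ 2 * ‖x‖ := by
  refine spread_le_iff.2 fun i j => ?_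
  have hi := (le_abs_self (x i)).trans (norm_le_pi_norm x i)
  have hj := (neg_abs_le (x j)).trans' (neg_le_neg (norm_le_pi_norm x j))
  linarith

theorem norm_le_spread_add_abs (x : n → ℝ) (k : n) : ‖x‖ ≤ spread x + |x k| := by
  refine (pi_norm_le_iff_of_nonneg (add_nonneg (spread_nonneg x) (abs_nonneg _))).2 fun i => ?_
  rw [Real.norm_eq_abs, abs_le]
  constructor
  · linarith [sub_le_spread x k i, neg_abs_le (x k)]
  · linarith [sub_le_spread x i k, le_abs_self (x k)]

end Spread

namespace Matrix

variable {n m : Type*} [Fintype n] [Fintype m]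

section Stochastic

variable [DecidableEq n] {A : Matrix n n ℝ}

theorem mulVec_apply_sub_eq_sum (hA : A ∈ rowStochastic ℝ n) (x : n → ℝ) (c : ℝ) (i : n) :
    (A *ᵥ x) i - c = ∑ j, A i j * (x j - c) := by
  simp only [mul_sub, sum_sub_distrib, ← sum_mul, sum_row_of_mem_rowStochastic hA, one_mul]
  rfl

theorem mulVec_apply_le (hA : A ∈ rowStochastic ℝ n) {x : n → ℝ} {c : ℝ} (hc : ∀ j, x j ≤ c)
    (i : n) : (A *ᵥ x) i ≤ c :=
  sub_nonpos.1 <| (mulVec_apply_sub_eq_sum hA x c i).trans_le <|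
    sum_nonpos fun j _ => mul_nonpos_of_nonneg_of_nonpos (hA.1 i j) (sub_nonpos.2 (hc j))

theorem mul_sub_le_mulVec_apply_sub (hA : A ∈ rowStochastic ℝ n) {x : n → ℝ} {c : ℝ}
    (hc : ∀ j, c ≤ x j) (i k : n) : A i k * (x k - c) ≤ (A *ᵥ x) i - c :=
  (mulVec_apply_sub_eq_sum hA x c i).symm ▸
    single_le_sum (fun j _ => mul_nonneg (hA.1 i j) (sub_nonneg.2 (hc j))) (mem_univ k)

variable [Nonempty n] {ε : ℝ}

theorem spread_mulVec_le (hA : A ∈ rowStochastic ℝ n) (hε : ∀ i j, ε ≤ A i j) (x : n → ℝ) :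
    spread (A *ᵥ x) ≤ (1 - ε) * spread x := by
  obtain ⟨i, j, hbounds, hspread⟩ := exists_spread_eq x
  refine spread_le_iff.2 fun a b => ?_
  have hupper := mulVec_apply_le hA (fun k => (hbounds k).2) a
  have hlower := mul_sub_le_mulVec_apply_sub hA (fun k => (hbounds k).1) b i
  have hε_mul := mul_le_mul_of_nonneg_right (hε b i) (sub_nonneg.2 (hbounds i).1)
  rw [hspread]
  linarith

theorem spread_pow_mulVec_le (hA : A ∈ rowStochastic ℝ n) (hε : ∀ i j, ε ≤ A i j) (x : n → ℝ)
    (k : ℕ) : spread (A ^ k *ᵥ x) ≤ (1 - ε) ^ k * spread x := by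
  have hε_le : ε ≤ 1 := (hε (Classical.arbitrary n) (Classical.arbitrary n)).trans
    (le_one_of_mem_rowStochastic hA)
  induction k with
  | zero => simp
  | succ k ih =>
    rw [pow_succ', ← mulVec_mulVec, pow_succ', mul_assoc]
    exact (spread_mulVec_le hA hε _).trans (mul_le_mul_of_nonneg_left ih (sub_nonneg.2 hε_le))

theorem exists_spread_pow_mulVec_le (hA : A ∈ rowStochastic ℝ n) (hpos : ∀ i j, 0 < A i j)
    {r : ℝ} (hr : 0 < r) : ∃ q : ℕ, ∀ x, spread (A ^ q *ᵥ x) ≤ r * ‖x‖ := by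
  obtain ⟨⟨i, j⟩, hmin⟩ := Finite.exists_min fun p : n × n => A p.1 p.2
  have hε : ∀ a b, A i j ≤ A a b := fun a b => hmin (a, b)
  obtain ⟨q, hq⟩ := exists_pow_lt_of_lt_one (half_pos hr) (sub_lt_self 1 (hpos i j))
  refine ⟨q, fun x => ?_⟩
  calc spread (A ^ q *ᵥ x) ≤ (1 - A i j) ^ q * spread x := spread_pow_mulVec_le hA hε x q
    _ ≤ r / 2 * (2 * ‖x‖) :=
      mul_le_mul hq.le (spread_le_two_mul_norm x) (spread_nonneg x) (half_pos hr).le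
    _ = r * ‖x‖ := by ring

end Stochastic

def UniformlyDetectable [DecidableEq n] (A : Matrix n n ℝ) (C : Matrix m n ℝ) : Prop :=
  ∃ p q : ℕ, ∃ a b : ℝ, 0 ≤ a ∧ a < 1 ∧ 0 < b ∧
    ∀ ζ : n → ℝ, a * ‖ζ‖ ≤ ‖(A ^ p) *ᵥ ζ‖ →
      b * (ζ ⬝ᵥ ζ) ≤ ∑ i ∈ range (q + 1), (C *ᵥ ((A ^ i) *ᵥ ζ)) ⬝ᵥ (C *ᵥ ((A ^ i) *ᵥ ζ))

theorem dotProduct_self_le_card_mul_norm_sq (x : n → ℝ) :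
    x ⬝ᵥ x ≤ Fintype.card n * ‖x‖ ^ 2 := by
  calc x ⬝ᵥ x = ∑ i, |x i| ^ 2 := by simp [dotProduct, sq]
    _ ≤ ∑ _i : n, ‖x‖ ^ 2 := sum_le_sum fun i _ => by
      gcongr
      exact norm_le_pi_norm x i
    _ = Fintype.card n * ‖x‖ ^ 2 := by simp

theorem sq_le_dotProduct_mulVec_self [DecidableEq n] {C : Matrix m n ℝ} {i₀ : m} {k : n}
    (hC : C i₀ = Pi.single k 1) (v : n → ℝ) : v k ^ 2 ≤ (C *ᵥ v) ⬝ᵥ (C *ᵥ v) := by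
  have hrow : (C *ᵥ v) i₀ = v k := by rw [mulVec, hC, single_dotProduct, one_mul]
  rw [← hrow, sq]
  exact single_le_sum (f := fun i => (C *ᵥ v) i * (C *ᵥ v) i) (fun i _ => mul_self_nonneg _)
    (mem_univ i₀)

theorem uniformlyDetectable_of_spread_pow_mulVec_le [DecidableEq n] [Nonempty n]
    {A : Matrix n n ℝ} {q : ℕ} (hq : ∀ x, spread (A ^ q *ᵥ x) ≤ 4⁻¹ * ‖x‖)
    {C : Matrix m n ℝ} {i₀ : m} {k : n} (hC : C i₀ = Pi.single k 1) :
    UniformlyDetectable A C := by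
  refine ⟨q, q, 2⁻¹, (16 * Fintype.card n)⁻¹, by norm_num, by norm_num, by positivity,
    fun ζ hζ => ?_⟩
  set y := A ^ q *ᵥ ζ
  have hyk : 4⁻¹ * ‖ζ‖ ≤ |y k| := by linarith [norm_le_spread_add_abs y k, hq ζ]
  calc (16 * Fintype.card n : ℝ)⁻¹ * (ζ ⬝ᵥ ζ)
      ≤ (16 * Fintype.card n : ℝ)⁻¹ * (Fintype.card n * ‖ζ‖ ^ 2) := by
        gcongr
        exact dotProduct_self_le_card_mul_norm_sq ζ
    _ = (4⁻¹ * ‖ζ‖) ^ 2 := by field_simp; ring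
    _ ≤ y k ^ 2 := by
        rw [← sq_abs (y k)]
        gcongr
    _ ≤ (C *ᵥ y) ⬝ᵥ (C *ᵥ y) := sq_le_dotProduct_mulVec_self hC y
    _ ≤ ∑ i ∈ range (q + 1), (C *ᵥ ((A ^ i) *ᵥ ζ)) ⬝ᵥ (C *ᵥ ((A ^ i) *ᵥ ζ)) :=
        single_le_sum (f := fun i => (C *ᵥ ((A ^ i) *ᵥ ζ)) ⬝ᵥ (C *ᵥ ((A ^ i) *ᵥ ζ)))
          (fun i _ => sum_nonneg fun j _ => mul_self_nonneg _) (self_mem_range_succ q)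

end Matrix

/-- For the Laplacian `L` of a strongly connected weighted graph,
`A = exp(-(Δt • L))` together with any state-output matrix `C` (each row a standard
basis vector) forms a uniformly detectable pair. -/
theorem laplacian_exp_state_output_uniformly_detectable
    {n m : Type*} [Fintype n] [Nonempty n] [DecidableEq n] [Fintype m] [Nonempty m]
    (w : n → n → ℝ) (hw : ∀ i j, 0 ≤ w i j) (hdiag : ∀ i, w i i = 0)
    (hconn : ∀ i j, Relation.ReflTransGen (fun a b => 0 < w a b) i j)
    (L : Matrix n n ℝ)
    (hL : ∀ i j, L i j = if i = j then ∑ k, w i k else -(w i j))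
    (Δt : ℝ) (hΔt : 0 < Δt)
    (A : Matrix n n ℝ) (hA : A = NormedSpace.exp (-(Δt • L)))
    (C : Matrix m n ℝ) (hC : ∃ f : m → n, ∀ i j, C i j = if j = f i then 1 else 0) :
    ∃ p q : ℕ, ∃ a b : ℝ, 0 ≤ a ∧ a < 1 ∧ 0 < b ∧
      ∀ ζ : n → ℝ, a * ‖ζ‖ ≤ ‖(A ^ p) *ᵥ ζ‖ →
        b * (ζ ⬝ᵥ ζ) ≤ ∑ i ∈ Finset.range (q + 1),
          (C *ᵥ ((A ^ i) *ᵥ ζ)) ⬝ᵥ (C *ᵥ ((A ^ i) *ᵥ ζ)) := by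
  obtain ⟨f, hf⟩ := hC
  obtain rfl : L = weightedLaplacian w := Matrix.ext hL
  subst hA
  have hpos i j := exp_neg_smul_weightedLaplacian_apply_pos hw hdiag hΔt (hconn i j)
  have hstoch : NormedSpace.exp (-(Δt • weightedLaplacian w)) ∈ rowStochastic ℝ n :=
    ⟨fun i j => (hpos i j).le, exp_neg_smul_weightedLaplacian_mulVec_one hdiag Δt⟩
  obtain ⟨q, hq⟩ := exists_spread_pow_mulVec_le hstoch hpos (by norm_num : (0 : ℝ) < 4⁻¹)
  have hC : C (Classical.arbitrary m) = Pi.single (f (Classical.arbitrary m)) 1 :=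
    funext fun j => by rw [hf, Pi.single_apply]
  exact uniformlyDetectable_of_spread_pow_mulVec_le hq hC
end

section
/- Let n be a nonempty finite type. Let w : n → n → ℝ be a weight function with 0 ≤ w i j for all i, j and w i i = 0, whose graph is strongly connected, and let L be its Laplacian. Let γ : ℝ satisfy L i i ≤ γ for all i. Then the matrix A = γ • (1 : Matrix n n ℝ) - L is entrywise nonnegative (0 ≤ A i j for all i, j) and irreducible in the sense that for all i, j there exists k : ℕ with 0 < (A ^ k) i j. -/
/-!
Off the diagonal, `γ • 1 - L` coincides with `w`, and its diagonal `γ - L i i` is nonnegative.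
So every edge of the graph is a positive entry, and for a nonnegative matrix a walk of length `k`
from `i` to `j` through positive entries makes `(A ^ k) i j` positive.
-/

open Matrix

namespace Matrix

variable {n R : Type*} [Fintype n] [DecidableEq n]

theorem exists_pow_apply_pos_of_reflTransGen [Semiring R] [PartialOrder R] [IsOrderedRing R]
    [PosMulStrictMono R] [Nontrivial R] {A : Matrix n n R} (hA : ∀ i j, 0 ≤ A i j) {i j : n}
    (h : Relation.ReflTransGen (fun a b => 0 < A a b) i j) : ∃ k : ℕ, 0 < (A ^ k) i j := by
  induction h with
  | refl => exact ⟨0, by simp⟩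
  | @tail b c _ hbc ih =>
    obtain ⟨k, hk⟩ := ih
    refine ⟨k + 1, ?_⟩
    rw [pow_succ, mul_apply]
    exact (mul_pos hk hbc).trans_le <| Finset.single_le_sum
      (fun l _ => mul_nonneg (pow_apply_nonneg hA k i l) (hA l c)) (Finset.mem_univ b)

theorem smul_one_sub_apply_of_laplacian {w : n → n → ℝ} {L : Matrix n n ℝ}
    (hL : ∀ i j, L i j = if i = j then ∑ k, w i k else -(w i j)) (γ : ℝ) (i j : n) :
    (γ • (1 : Matrix n n ℝ) - L) i j = if i = j then γ - L i i else w i j := by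
  obtain rfl | hij := eq_or_ne i j
  · simp
  · simp [hij, hL i j]

end Matrix

theorem smul_one_sub_laplacian_nonneg_irreducible_general
    {n : Type*} [Fintype n] [DecidableEq n]
    (w : n → n → ℝ) (hw : ∀ i j, 0 ≤ w i j) (hdiag : ∀ i, w i i = 0)
    (hconn : ∀ i j, Relation.ReflTransGen (fun a b => 0 < w a b) i j)
    (L : Matrix n n ℝ)
    (hL : ∀ i j, L i j = if i = j then ∑ k, w i k else -(w i j))
    (γ : ℝ) (hγ : ∀ i, L i i ≤ γ)
    (A : Matrix n n ℝ) (hA : A = γ • (1 : Matrix n n ℝ) - L) :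
    (∀ i j, 0 ≤ A i j) ∧ (∀ i j, ∃ k : ℕ, 0 < (A ^ k) i j) := by
  have hentry : ∀ i j, A i j = if i = j then γ - L i i else w i j := by
    subst hA
    exact smul_one_sub_apply_of_laplacian hL γ
  have hnonneg : ∀ i j, 0 ≤ A i j := by
    intro i j
    rw [hentry]
    split_ifs
    exacts [sub_nonneg.mpr (hγ i), hw i j]
  have hedge : ∀ a b, 0 < w a b → 0 < A a b := by
    intro a b hab
    have hne : a ≠ b := by
      rintro rfl
      exact hab.ne' (hdiag a)
    rwa [hentry, if_neg hne]
  exact ⟨hnonneg, fun i j =>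
    exists_pow_apply_pos_of_reflTransGen hnonneg (Relation.ReflTransGen.mono hedge _ _ (hconn i j))⟩

/-- For the Laplacian `L` of a strongly connected weighted graph and any
`γ` dominating the diagonal of `L`, the matrix `γ • 1 - L` is entrywise nonnegative
and irreducible. -/
theorem smul_one_sub_laplacian_nonneg_irreducible
    {n : Type*} [Fintype n] [Nonempty n] [DecidableEq n]
    (w : n → n → ℝ) (hw : ∀ i j, 0 ≤ w i j) (hdiag : ∀ i, w i i = 0)
    (hconn : ∀ i j, Relation.ReflTransGen (fun a b => 0 < w a b) i j)
    (L : Matrix n n ℝ)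
    (hL : ∀ i j, L i j = if i = j then ∑ k, w i k else -(w i j))
    (γ : ℝ) (hγ : ∀ i, L i i ≤ γ)
    (A : Matrix n n ℝ) (hA : A = γ • (1 : Matrix n n ℝ) - L) :
    (∀ i j, 0 ≤ A i j) ∧ (∀ i j, ∃ k : ℕ, 0 < (A ^ k) i j) :=
  smul_one_sub_laplacian_nonneg_irreducible_general w hw hdiag hconn L hL γ hγ A hA
end
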